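/- Let q > 2, λ > 0, and f₀ > 0. Let f be a twice continuously differentiable solution of the ODE f''(ξ) + λ|f'(ξ)|^q − (1/2)ξ f'(ξ) + ((q−2)/(2(q−1))) f(ξ) = 0 on an interval [0, ξ̄) (with 0 < ξ̄ ≤ ∞), satisfying f(0) = f₀ and f'(0) = 0. Then f'(ξ) < 0 and f''(ξ) < 0 for every ξ ∈ (0, ξ̄). -/

import Mathlib

open Set Filter Topology Real

/-- The interval `[0, ξb)` of real numbers, where the right endpoint `ξb` is an
extended real number (so `ξb = ⊤` gives `[0, ∞)`). -/
def KPZDomain (ξb : EReal) : Set ℝ := {ξ : ℝ | 0 ≤ ξ ∧ (ξ : EReal) < ξb}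

/-- `f` is a twice continuously differentiable solution, on the set `s`, of the
self-similar profile ODE `f'' + λ|f'|^q - (1/2)ξ f' + ((q-2)/(2(q-1))) f = 0`
associated with the generalized deterministic KPZ equation. -/
def SolvesKPZProfile (q lam : ℝ) (s : Set ℝ) (f : ℝ → ℝ) : Prop :=
  ContDiffOn ℝ 2 f s ∧
  ∀ ξ ∈ s,
    derivWithin (derivWithin f s) s ξ + lam * |derivWithin f s ξ| ^ q
      - (1 / 2) * ξ * derivWithin f s ξ + ((q - 2) / (2 * (q - 1))) * f ξ = 0


/-!
Write `c = (q - 2) / (2 (q - 1))`, so `0 < c < 1/2`. The equation gives `f''(0) = -c f₀ < 0`.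
If `f''` vanished somewhere, then at its first zero `ξ₁` we would have `f'(ξ₁) < f'(0) = 0`, so
`|f'| ^ q` is differentiable near `ξ₁`, and differentiating the equation gives
`f'''(ξ₁) = (1/2 - c) f'(ξ₁) < 0`; this contradicts `f'' < 0 = f''(ξ₁)` on `[0, ξ₁)`.
Hence `f'' < 0` on `(0, ξb)`, and then `f' < f'(0) = 0` there.
-/

lemma HasDerivAt.nonneg_of_eventually_le_left {u : ℝ → ℝ} {d c : ℝ} (hd : HasDerivAt u d c)
    (hle : ∀ᶠ x in 𝓝[<] c, u x ≤ u c) : 0 ≤ d := by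
  refine ge_of_tendsto ((hasDerivAt_iff_tendsto_slope.1 hd).mono_left
    (nhdsWithin_mono _ fun x (hx : x ∈ Iio c) => hx.ne)) ?_
  filter_upwards [hle, self_mem_nhdsWithin] with x hux hx
  rw [slope_def_field]
  exact div_nonneg_of_nonpos (by linarith) (by linarith [mem_Iio.1 hx])

lemma exists_first_zero_of_continuousOn {u : ℝ → ℝ} {a b : ℝ} (hab : a ≤ b)
    (hu : ContinuousOn u (Icc a b)) (ha : u a < 0) (hb : 0 ≤ u b) :
    ∃ c ∈ Ioc a b, u c = 0 ∧ ∀ x ∈ Ico a c, u x < 0 := by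
  set T := {x ∈ Icc a b | 0 ≤ u x}
  have hT : IsClosed T := hu.preimage_isClosed_of_isClosed isClosed_Icc isClosed_Ici
  have hTb : BddBelow T := ⟨a, fun x hx => hx.1.1⟩
  obtain ⟨⟨hac, hcb⟩, hc⟩ : sInf T ∈ T := hT.csInf_mem ⟨b, ⟨hab, le_rfl⟩, hb⟩ hTb
  have hbefore : ∀ x ∈ Ico a (sInf T), u x < 0 := fun x hx =>
    lt_of_not_ge fun hux => (csInf_le hTb ⟨⟨hx.1, hx.2.le.trans hcb⟩, hux⟩).not_gt hx.2
  have hac' : a < sInf T := hac.lt_of_ne fun h => (h ▸ ha).not_ge hc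
  refine ⟨sInf T, ⟨hac', hcb⟩, hc.antisymm' (not_lt.1 fun hpos => ?_), hbefore⟩
  obtain ⟨x, hx, hux⟩ := intermediate_value_Icc hac (hu.mono (Icc_subset_Icc_right hcb))
    ⟨ha.le, hpos.le⟩
  exact (hbefore x ⟨hx.1, hx.2.lt_of_ne fun h => hpos.ne' (h ▸ hux)⟩).ne hux

lemma KPZDomain.ordConnected (ξb : EReal) : (KPZDomain ξb).OrdConnected :=
  ⟨fun _ hx _ hy _ hz => ⟨hx.1.trans hz.1, lt_of_le_of_lt (EReal.coe_le_coe_iff.2 hz.2) hy.2⟩⟩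

lemma KPZDomain.mem_nhds {ξb : EReal} {ξ : ℝ} (hξ : 0 < ξ) (hξb : (ξ : EReal) < ξb) :
    KPZDomain ξb ∈ 𝓝 ξ :=
  mem_of_superset ((isOpen_Ioi.inter (isOpen_Iio.preimage continuous_coe_real_ereal)).mem_nhds
    ⟨hξ, hξb⟩) fun _ hx => ⟨le_of_lt hx.1, hx.2⟩

lemma KPZDomain.uniqueDiffOn {ξb : EReal} {ξ : ℝ} (hξ : 0 < ξ) (hξb : (ξ : EReal) < ξb) :
    UniqueDiffOn ℝ (KPZDomain ξb) :=
  uniqueDiffOn_convex (KPZDomain.ordConnected ξb).convex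
    ⟨ξ, mem_interior_iff_mem_nhds.2 (KPZDomain.mem_nhds hξ hξb)⟩

namespace SolvesKPZProfile

variable {q lam : ℝ} {s : Set ℝ} {f : ℝ → ℝ}

lemma derivWithin_derivWithin_eq (hsol : SolvesKPZProfile q lam s f) {ξ : ℝ} (hξ : ξ ∈ s) :
    derivWithin (derivWithin f s) s ξ = -(lam * |derivWithin f s ξ| ^ q)
      + ξ / 2 * derivWithin f s ξ - (q - 2) / (2 * (q - 1)) * f ξ := by
  linarith [hsol.2 ξ hξ]

lemma differentiableOn_derivWithin (hsol : SolvesKPZProfile q lam s f)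
    (hs : UniqueDiffOn ℝ s) : DifferentiableOn ℝ (derivWithin f s) s :=
  (hsol.1.derivWithin (m := 1) hs (by norm_num)).differentiableOn one_ne_zero

lemma continuousOn_derivWithin_derivWithin (hsol : SolvesKPZProfile q lam s f)
    (hs : UniqueDiffOn ℝ s) : ContinuousOn (derivWithin (derivWithin f s) s) s :=
  (hsol.1.derivWithin (m := 1) hs (by norm_num)).continuousOn_derivWithin hs le_rfl

lemma hasDerivAt_derivWithin_derivWithin (hsol : SolvesKPZProfile q lam s f)
    (hs : UniqueDiffOn ℝ s) {ξ : ℝ} (hξ : s ∈ 𝓝 ξ) (hneg : derivWithin f s ξ < 0) :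
    HasDerivAt (derivWithin (derivWithin f s) s)
      (lam * q * (-derivWithin f s ξ) ^ (q - 1) * derivWithin (derivWithin f s) s ξ
        + ξ / 2 * derivWithin (derivWithin f s) s ξ
        + (1 / 2 - (q - 2) / (2 * (q - 1))) * derivWithin f s ξ) ξ := by
  set g := derivWithin f s
  set c := (q - 2) / (2 * (q - 1))
  have hf : HasDerivAt f (g ξ) ξ :=
    ((hsol.1.differentiableOn (by norm_num)) ξ (mem_of_mem_nhds hξ)).hasDerivWithinAt.hasDerivAt hξ
  have hg : HasDerivAt g (derivWithin g s ξ) ξ :=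
    (hsol.differentiableOn_derivWithin hs ξ (mem_of_mem_nhds hξ)).hasDerivWithinAt.hasDerivAt hξ
  have hpow : HasDerivAt (fun ζ => (-g ζ) ^ q) (-derivWithin g s ξ * q * (-g ξ) ^ (q - 1)) ξ :=
    hg.neg.rpow_const (Or.inl (neg_ne_zero.2 hneg.ne))
  have hrhs := ((hpow.const_mul lam).neg.add (((hasDerivAt_id ξ).div_const 2).mul hg)).sub
    (hf.const_mul c)
  have heq : (fun ζ => -(lam * (-g ζ) ^ q) + ζ / 2 * g ζ - c * f ζ) =ᶠ[𝓝 ξ]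
      derivWithin g s := by
    filter_upwards [hξ, (hsol.differentiableOn_derivWithin hs).continuousOn.continuousAt hξ
      |>.eventually_lt continuousAt_const hneg] with ζ hζ hgζ
    rw [hsol.derivWithin_derivWithin_eq hζ, abs_of_neg hgζ]
  exact (hrhs.congr_of_eventuallyEq heq.symm).congr_deriv (by simp only [id]; ring)

lemma derivWithin_neg_of_forall_Ioo (hsol : SolvesKPZProfile q lam s f) (hs : UniqueDiffOn ℝ s)
    {ξ : ℝ} (hξ : 0 < ξ) (hsub : Icc 0 ξ ⊆ s) (hnhds : ∀ ζ ∈ Ioo 0 ξ, s ∈ 𝓝 ζ)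
    (hf'0 : derivWithin f s 0 = 0)
    (hneg : ∀ ζ ∈ Ioo 0 ξ, derivWithin (derivWithin f s) s ζ < 0) :
    derivWithin f s ξ < 0 := by
  have hanti : StrictAntiOn (derivWithin f s) (Icc 0 ξ) := by
    refine strictAntiOn_of_deriv_neg (convex_Icc 0 ξ)
      ((hsol.differentiableOn_derivWithin hs).continuousOn.mono hsub) fun ζ hζ => ?_
    rw [interior_Icc] at hζ
    simpa only [derivWithin_of_mem_nhds (hnhds ζ hζ)] using hneg ζ hζ
  simpa [hf'0] using hanti (left_mem_Icc.2 hξ.le) (right_mem_Icc.2 hξ.le) hξ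

lemma derivWithin_derivWithin_neg (hsol : SolvesKPZProfile q lam s f) (hq : 2 < q)
    (hs : UniqueDiffOn ℝ s) (hconn : s.OrdConnected) (hs0 : 0 ∈ s)
    (hnhds : ∀ ξ ∈ s, 0 < ξ → s ∈ 𝓝 ξ) (hf0 : 0 < f 0) (hf'0 : derivWithin f s 0 = 0)
    {ξ : ℝ} (hξ : ξ ∈ s) (hξpos : 0 < ξ) :
    derivWithin (derivWithin f s) s ξ < 0 := by
  set c := (q - 2) / (2 * (q - 1))
  have hc : 0 < c := div_pos (by linarith) (by linarith)
  have hc' : c < 1 / 2 := by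
    rw [div_lt_iff₀ (by linarith)]
    linarith
  have hh0 : derivWithin (derivWithin f s) s 0 < 0 := by
    rw [hsol.derivWithin_derivWithin_eq hs0, hf'0, abs_zero, zero_rpow (by linarith)]
    nlinarith
  by_contra! hξ₀
  have hsub : Icc 0 ξ ⊆ s := hconn.out hs0 hξ
  obtain ⟨ξ₁, ⟨hξ₁pos, hξ₁le⟩, hzero, hbefore⟩ := exists_first_zero_of_continuousOn hξpos.le
    ((hsol.continuousOn_derivWithin_derivWithin hs).mono hsub) hh0 hξ₀
  have hsub₁ : Icc 0 ξ₁ ⊆ s := (Icc_subset_Icc_right hξ₁le).trans hsub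
  have hnhds₁ : ∀ ζ ∈ Ioc 0 ξ₁, s ∈ 𝓝 ζ :=
    fun ζ hζ => hnhds ζ (hsub₁ (Ioc_subset_Icc_self hζ)) hζ.1
  have hg : derivWithin f s ξ₁ < 0 :=
    hsol.derivWithin_neg_of_forall_Ioo hs hξ₁pos hsub₁
      (fun ζ hζ => hnhds₁ ζ (Ioo_subset_Ioc_self hζ)) hf'0
      (fun ζ hζ => hbefore ζ (Ioo_subset_Ico_self hζ))
  have hd := hsol.hasDerivAt_derivWithin_derivWithin hs (hnhds₁ ξ₁ ⟨hξ₁pos, le_rfl⟩) hg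
  rw [hzero] at hd
  have hd_nonneg := hd.nonneg_of_eventually_le_left <| by
    filter_upwards [Ioo_mem_nhdsLT hξ₁pos] with ζ hζ
    exact hzero ▸ (hbefore ζ ⟨hζ.1.le, hζ.2⟩).le
  nlinarith

lemma derivWithin_neg (hsol : SolvesKPZProfile q lam s f) (hq : 2 < q)
    (hs : UniqueDiffOn ℝ s) (hconn : s.OrdConnected) (hs0 : 0 ∈ s)
    (hnhds : ∀ ξ ∈ s, 0 < ξ → s ∈ 𝓝 ξ) (hf0 : 0 < f 0) (hf'0 : derivWithin f s 0 = 0)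
    {ξ : ℝ} (hξ : ξ ∈ s) (hξpos : 0 < ξ) :
    derivWithin f s ξ < 0 :=
  have hsub : Icc 0 ξ ⊆ s := hconn.out hs0 hξ
  hsol.derivWithin_neg_of_forall_Ioo hs hξpos hsub
    (fun ζ hζ => hnhds ζ (hsub (Ioo_subset_Icc_self hζ)) hζ.1) hf'0
    (fun _ hζ => hsol.derivWithin_derivWithin_neg hq hs hconn hs0 hnhds hf0 hf'0
      (hsub (Ioo_subset_Icc_self hζ)) hζ.1)

end SolvesKPZProfile

theorem kpz_profile_pos_data_derivs_neg_general (q lam f₀ : ℝ) (hq : 2 < q)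
    (hf₀ : 0 < f₀)
    (ξb : EReal)
    (f : ℝ → ℝ)
    (hsol : SolvesKPZProfile q lam (KPZDomain ξb) f)
    (hf0 : f 0 = f₀)
    (hf'0 : derivWithin f (KPZDomain ξb) 0 = 0) :
    ∀ ξ : ℝ, 0 < ξ → (ξ : EReal) < ξb →
      derivWithin f (KPZDomain ξb) ξ < 0 ∧
      derivWithin (derivWithin f (KPZDomain ξb)) (KPZDomain ξb) ξ < 0 := by
  intro ξ hξ hξb
  have hs := KPZDomain.uniqueDiffOn hξ hξb
  have hs0 : 0 ∈ KPZDomain ξb := ⟨le_rfl, (EReal.coe_lt_coe_iff.2 hξ).trans hξb⟩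
  have hnhds : ∀ ζ ∈ KPZDomain ξb, 0 < ζ → KPZDomain ξb ∈ 𝓝 ζ :=
    fun ζ hζ hζpos => KPZDomain.mem_nhds hζpos hζ.2
  exact ⟨hsol.derivWithin_neg hq hs (KPZDomain.ordConnected ξb) hs0 hnhds (hf0 ▸ hf₀) hf'0
      ⟨hξ.le, hξb⟩ hξ,
    hsol.derivWithin_derivWithin_neg hq hs (KPZDomain.ordConnected ξb) hs0 hnhds (hf0 ▸ hf₀) hf'0
      ⟨hξ.le, hξb⟩ hξ⟩

theorem kpz_profile_pos_data_derivs_neg (q lam f₀ : ℝ) (hq : 2 < q) (hlam : 0 < lam)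
    (hf₀ : 0 < f₀)
    (ξb : EReal) (hξb : 0 < ξb)
    (f : ℝ → ℝ)
    (hsol : SolvesKPZProfile q lam (KPZDomain ξb) f)
    (hf0 : f 0 = f₀)
    (hf'0 : derivWithin f (KPZDomain ξb) 0 = 0) :
    ∀ ξ : ℝ, 0 < ξ → (ξ : EReal) < ξb →
      derivWithin f (KPZDomain ξb) ξ < 0 ∧
      derivWithin (derivWithin f (KPZDomain ξb)) (KPZDomain ξb) ξ < 0 :=
  kpz_profile_pos_data_derivs_neg_general q lam f₀ hq hf₀ ξb f hsol hf0 hf'0
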